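/- Let ζ, η, S̄ ∈ ℝ with ζ ≠ 0 and η ≥ 0, let ψ : ℝ → ℝ be twice differentiable with ψ(t) > 0 for all t, and set φ(t) = ψ(t)^{2ζ/(η+ζ²)}. Then -2ζ·φ''(t)/φ(t) - (η + ζ² - 2ζ)·(φ'(t)/φ(t))² + 6ζ·φ'(t)/φ(t) - 6 = S̄ for all t ∈ ℝ if and only if ψ''(t) - 3ψ'(t) + ((S̄+6)(η+ζ²)/(4ζ²))·ψ(t) = 0 for all t ∈ ℝ. -/

import Mathlib

/-!
Write `U = ψ'/ψ`, `W = ψ''/ψ` and `a = 2ζ/(η + ζ²)`. For `φ = ψ ^ a` one has `φ'/φ = a U` and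
`φ''/φ = a W + a (a - 1) U²`. With this choice of exponent the `U²` terms cancel, and the left-hand
side becomes `-(4ζ²/(η + ζ²)) (W - 3U) - 6`; multiplying by `ψ` gives the linear equation.
-/

section RpowComp

variable {ψ : ℝ → ℝ}

theorem hasDerivAt_rpow_const_of_pos (hψ : Differentiable ℝ ψ) (hpos : ∀ t, 0 < ψ t) (a t : ℝ) :
    HasDerivAt (fun s => ψ s ^ a) (a * (deriv ψ t / ψ t) * ψ t ^ a) t := by
  convert (hψ t).hasDerivAt.rpow_const (p := a) (Or.inl (hpos t).ne') using 1
  rw [Real.rpow_sub_one (hpos t).ne']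
  field_simp

theorem deriv_rpow_const_of_pos (hψ : Differentiable ℝ ψ) (hpos : ∀ t, 0 < ψ t) (a : ℝ) :
    deriv (fun t => ψ t ^ a) = fun t => a * (deriv ψ t / ψ t) * ψ t ^ a :=
  funext fun t => (hasDerivAt_rpow_const_of_pos hψ hpos a t).deriv

theorem deriv_deriv_rpow_const_of_pos (hψ : Differentiable ℝ ψ)
    (hψ' : Differentiable ℝ (deriv ψ)) (hpos : ∀ t, 0 < ψ t) (a t : ℝ) :
    deriv (deriv fun t => ψ t ^ a) t =
      (a * (deriv (deriv ψ) t / ψ t) + a * (a - 1) * (deriv ψ t / ψ t) ^ 2) * ψ t ^ a := by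
  have hψt : ψ t ≠ 0 := (hpos t).ne'
  have hlog : HasDerivAt (fun s => deriv ψ s / ψ s)
      ((deriv (deriv ψ) t * ψ t - deriv ψ t * deriv ψ t) / ψ t ^ 2) t :=
    (hψ' t).hasDerivAt.div (hψ t).hasDerivAt hψt
  rw [deriv_rpow_const_of_pos hψ hpos a]
  refine ((hlog.const_mul a).mul (hasDerivAt_rpow_const_of_pos hψ hpos a t)).deriv.trans ?_
  field_simp
  ring

end RpowComp

theorem curvature_expr_rpow_eq {ζ K U W : ℝ} (hK : K ≠ 0) :
    -2 * ζ * ((2 * ζ / K) * W + (2 * ζ / K) * (2 * ζ / K - 1) * U ^ 2)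
        - (K - 2 * ζ) * ((2 * ζ / K) * U) ^ 2 + 6 * ζ * ((2 * ζ / K) * U) - 6 =
      -(4 * ζ ^ 2 / K) * (W - 3 * U) - 6 := by
  field_simp
  ring

theorem neg_mul_div_sub_six_eq_iff {c S x v w : ℝ} (hc : c ≠ 0) (hx : x ≠ 0) :
    -c * (w / x - 3 * (v / x)) - 6 = S ↔ w - 3 * v + ((S + 6) / c) * x = 0 := by
  constructor
  · rintro rfl
    field_simp
    ring
  · intro h
    have hw : w = 3 * v - ((S + 6) / c) * x := by linear_combination h
    subst hw
    field_simp
    ring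

theorem stmt_19 (ζ η Sbar : ℝ) (hζ : ζ ≠ 0) (hη : 0 ≤ η) (ψ : ℝ → ℝ)
    (hψ : Differentiable ℝ ψ) (hψ' : Differentiable ℝ (deriv ψ))
    (hψpos : ∀ t : ℝ, 0 < ψ t) (φ : ℝ → ℝ)
    (hφ : ∀ t : ℝ, φ t = ψ t ^ (2 * ζ / (η + ζ ^ 2))) :
    (∀ t : ℝ, -2 * ζ * deriv (deriv φ) t / φ t
        - (η + ζ ^ 2 - 2 * ζ) * (deriv φ t / φ t) ^ 2
        + 6 * ζ * (deriv φ t / φ t) - 6 = Sbar) ↔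
    (∀ t : ℝ, deriv (deriv ψ) t - 3 * deriv ψ t
        + ((Sbar + 6) * (η + ζ ^ 2) / (4 * ζ ^ 2)) * ψ t = 0) := by
  have hK : η + ζ ^ 2 ≠ 0 := by positivity
  obtain rfl : φ = fun t => ψ t ^ (2 * ζ / (η + ζ ^ 2)) := funext hφ
  refine forall_congr' fun t => ?_
  have hφt : ψ t ^ (2 * ζ / (η + ζ ^ 2)) ≠ 0 := (Real.rpow_pos_of_pos (hψpos t) _).ne'
  rw [deriv_deriv_rpow_const_of_pos hψ hψ' hψpos, deriv_rpow_const_of_pos hψ hψpos,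
    mul_div_assoc, mul_div_cancel_right₀ _ hφt, mul_div_cancel_right₀ _ hφt,
    curvature_expr_rpow_eq hK,
    neg_mul_div_sub_six_eq_iff (by positivity) (hψpos t).ne', div_div_eq_mul_div]
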